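/- arXiv:2005.13272 — 3 statements merged into one kernel-verified Lean document; each statement's English description precedes it below -/
import Mathlib

section
/- Let T > 0, L ≥ 0, and let φ : ℝ × ℝⁿ × ℝⁿ → ℝⁿ be continuous and satisfy ‖φ(t, y, z) − φ(t, y′, z′)‖ ≤ L(‖y − y′‖ + ‖z − z′‖) for all t ∈ [0, T] and all y, y′, z, z′ ∈ ℝⁿ. Let s : [0, T] → ℝⁿ be differentiable with s′(t) = φ(t, s(t), s(t)), s(0) = s₀, and let s⁰ : [0, T] → ℝⁿ be continuous and, for each k ≥ 1, let s^k be differentiable with (s^k)′(t) = φ(t, s^k(t), s^{k−1}(t)) and s^k(0) = s₀. Then for every k ≥ 1 and every t ∈ [0, T], ‖s^k(t) − s(t)‖ ≤ (L e^{LT})^k · (t^k / k!) · sup_{τ ∈ [0, T]} ‖s⁰(τ) − s(τ)‖. In particular the waveform relaxation iterates converge superlinearly to s, uniformly on [0, T]. -/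
open Set Filter

/-! Writing `eₖ = ‖Sₖ − s‖`, the Lipschitz bound on `φ` turns the waveform relaxation recursion
into the differential inequality `eₖ₊₁' ≤ L eₖ₊₁ + L eₖ` with `eₖ₊₁(0) = 0`. Comparing with the
solution of `B' = L B + c e^{Lt} t^k / k!`, `B(0) = 0`, namely `B = c e^{Lt} t^{k+1} / (k+1)!`,
gives by induction `eₖ(t) ≤ M Lᵏ e^{Lt} tᵏ / k!` with `M = sup e₀`; for `k ≥ 1` the factor
`e^{Lt}` is absorbed into `(e^{LT})ᵏ`. -/

theorem tendstoUniformlyOn_of_norm_sub_le {ι α E : Type*} [SeminormedAddCommGroup E]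
    {l : Filter ι} {F : ι → α → E} {f : α → E} {s : Set α} {u : ι → ℝ}
    (hu : Tendsto u l (nhds 0)) (h : ∀ᶠ i in l, ∀ x ∈ s, ‖F i x - f x‖ ≤ u i) :
    TendstoUniformlyOn F f l s := by
  refine Metric.tendstoUniformlyOn_iff.2 fun ε hε => ?_
  filter_upwards [h, hu.eventually (gt_mem_nhds hε)] with i hi hui x hx
  rw [dist_comm, dist_eq_norm]
  exact (hi x hx).trans_lt hui

theorem pow_mul_exp_mul_le_mul_exp_mul_pow {L t T : ℝ} {k : ℕ} (hL : 0 ≤ L) (ht : t ≤ T)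
    (hT : 0 ≤ T) (hk : k ≠ 0) : L ^ k * Real.exp (L * t) ≤ (L * Real.exp (L * T)) ^ k := by
  rw [mul_pow]
  gcongr
  calc Real.exp (L * t) ≤ Real.exp (L * T) := by gcongr
    _ ≤ Real.exp (L * T) ^ k := le_self_pow₀ (Real.one_le_exp (mul_nonneg hL hT)) hk

section WaveformRelaxation

variable {E : Type*} [NormedAddCommGroup E] [NormedSpace ℝ E]

theorem image_norm_le_of_norm_deriv_right_le_lipschitz_deriv_boundary
    {f f' : ℝ → E} {B B' : ℝ → ℝ} {a b L : ℝ}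
    (hf : ContinuousOn f (Icc a b)) (hf' : ∀ x ∈ Ico a b, HasDerivWithinAt f (f' x) (Ici x) x)
    (ha : ‖f a‖ ≤ B a) (hB : ContinuousOn B (Icc a b))
    (hB' : ∀ x ∈ Ico a b, HasDerivWithinAt B (B' x) (Ici x) x)
    (bound : ∀ x ∈ Ico a b, ‖f' x‖ ≤ L * ‖f x‖ + (B' x - L * B x)) :
    ∀ ⦃x⦄, x ∈ Icc a b → ‖f x‖ ≤ B x := by
  intro x hx
  -- Adding `ε e^{(L+1)t}` to `B` makes the inequality strict at contact points.
  have slack : ∀ ε > 0, ‖f x‖ ≤ B x + ε * Real.exp ((L + 1) * x) := by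
    intro ε hε
    have hg : ∀ y, HasDerivAt (fun t => ε * Real.exp ((L + 1) * t))
        (ε * Real.exp ((L + 1) * y) * (L + 1)) y := fun y => by
      simpa [mul_assoc] using (((hasDerivAt_id y).const_mul (L + 1)).exp).const_mul ε
    refine image_norm_le_of_norm_deriv_right_lt_deriv_boundary'
      (B := fun t => B t + ε * Real.exp ((L + 1) * t)) hf hf'
      (by linarith [mul_pos hε (Real.exp_pos ((L + 1) * a))])
      (hB.add (by fun_prop)) (fun y hy => (hB' y hy).add (hg y).hasDerivWithinAt) ?_ hx
    intro y hy hcontact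
    have hpos := mul_pos hε (Real.exp_pos ((L + 1) * y))
    calc ‖f' y‖ ≤ L * ‖f y‖ + (B' y - L * B y) := bound y hy
      _ = B' y + L * (ε * Real.exp ((L + 1) * y)) := by rw [hcontact]; ring
      _ < B' y + ε * Real.exp ((L + 1) * y) * (L + 1) := by nlinarith
  refine le_of_forall_pos_le_add fun ε hε => ?_
  have hexp := Real.exp_pos ((L + 1) * x)
  simpa [div_mul_cancel₀ ε hexp.ne'] using slack (ε / Real.exp ((L + 1) * x)) (div_pos hε hexp)

theorem hasDerivAt_exp_mul_pow_succ_div_factorial (L a x : ℝ) (k : ℕ) :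
    HasDerivAt (fun t => Real.exp (L * t) * (t - a) ^ (k + 1) / (k + 1).factorial)
      (L * (Real.exp (L * x) * (x - a) ^ (k + 1) / (k + 1).factorial)
        + Real.exp (L * x) * (x - a) ^ k / k.factorial) x := by
  have hexp : HasDerivAt (fun t => Real.exp (L * t)) (Real.exp (L * x) * L) x := by
    simpa using ((hasDerivAt_id x).const_mul L).exp
  have hpow : HasDerivAt (fun t => (t - a) ^ (k + 1)) ((k + 1 : ℕ) * (x - a) ^ k) x := by
    simpa [Function.comp_def] using
      (hasDerivAt_pow (k + 1) (x - a)).comp x ((hasDerivAt_id x).sub_const a)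
  refine ((hexp.mul hpow).div_const ((k + 1).factorial : ℝ)).congr_deriv ?_
  rw [Nat.factorial_succ]
  push_cast
  field_simp

theorem norm_le_exp_mul_pow_succ_div_factorial_of_norm_deriv_right_le
    {f f' : ℝ → E} {a b L c : ℝ} {k : ℕ}
    (hf : ContinuousOn f (Icc a b)) (hf' : ∀ x ∈ Ico a b, HasDerivWithinAt f (f' x) (Ici x) x)
    (ha : f a = 0)
    (bound : ∀ x ∈ Ico a b,
      ‖f' x‖ ≤ L * ‖f x‖ + c * (Real.exp (L * x) * (x - a) ^ k / k.factorial)) :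
    ∀ ⦃x⦄, x ∈ Icc a b →
      ‖f x‖ ≤ c * (Real.exp (L * x) * (x - a) ^ (k + 1) / (k + 1).factorial) := by
  refine image_norm_le_of_norm_deriv_right_le_lipschitz_deriv_boundary hf hf' (by simp [ha])
    (by fun_prop)
    (fun x _ => ((hasDerivAt_exp_mul_pow_succ_div_factorial L a x k).const_mul c).hasDerivWithinAt)
    fun x hx => (bound x hx).trans_eq (by ring)

variable {T L M : ℝ} {φ : ℝ → E → E → E} {s : ℝ → E} {S : ℕ → ℝ → E}

theorem norm_waveform_iterate_sub_le (hL : 0 ≤ L)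
    (hφ : ∀ t ∈ Icc (0 : ℝ) T, ∀ y y' z z' : E,
      ‖φ t y z - φ t y' z'‖ ≤ L * (‖y - y'‖ + ‖z - z'‖))
    (hs : ∀ t ∈ Icc (0 : ℝ) T, HasDerivWithinAt s (φ t (s t) (s t)) (Icc 0 T) t)
    (hS : ∀ k, ∀ t ∈ Icc (0 : ℝ) T,
      HasDerivWithinAt (S (k + 1)) (φ t (S (k + 1) t) (S k t)) (Icc 0 T) t)
    (hS_zero : ∀ k, S (k + 1) 0 = s 0)
    (hM : ∀ t ∈ Icc (0 : ℝ) T, ‖S 0 t - s t‖ ≤ M) (k : ℕ) :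
    ∀ t ∈ Icc (0 : ℝ) T,
      ‖S k t - s t‖ ≤ M * L ^ k * (Real.exp (L * t) * t ^ k / k.factorial) := by
  induction k with
  | zero =>
    intro t ht
    have hM_nonneg : 0 ≤ M := (norm_nonneg _).trans (hM t ht)
    simpa using (hM t ht).trans
      (le_mul_of_one_le_right hM_nonneg (Real.one_le_exp (mul_nonneg hL ht.1)))
  | succ k ih =>
    intro t ht
    have hderiv : ∀ x ∈ Icc (0 : ℝ) T, HasDerivWithinAt (fun t => S (k + 1) t - s t)
        (φ x (S (k + 1) x) (S k x) - φ x (s x) (s x)) (Icc 0 T) x :=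
      fun x hx => (hS k x hx).sub (hs x hx)
    have bound : ∀ x ∈ Ico (0 : ℝ) T,
        ‖φ x (S (k + 1) x) (S k x) - φ x (s x) (s x)‖ ≤ L * ‖S (k + 1) x - s x‖
          + M * L ^ (k + 1) * (Real.exp (L * x) * (x - 0) ^ k / k.factorial) := by
      intro x hx
      have hx' : x ∈ Icc (0 : ℝ) T := Ico_subset_Icc_self hx
      calc ‖φ x (S (k + 1) x) (S k x) - φ x (s x) (s x)‖
          ≤ L * ‖S (k + 1) x - s x‖ + L * ‖S k x - s x‖ :=
            (hφ x hx' (S (k + 1) x) (s x) (S k x) (s x)).trans_eq (mul_add _ _ _)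
        _ ≤ L * ‖S (k + 1) x - s x‖
              + L * (M * L ^ k * (Real.exp (L * x) * x ^ k / k.factorial)) := by
            gcongr; exact ih x hx'
        _ = _ := by rw [sub_zero]; ring
    simpa using norm_le_exp_mul_pow_succ_div_factorial_of_norm_deriv_right_le
      (fun x hx => (hderiv x hx).continuousWithinAt)
      (fun x hx => (hderiv x (Ico_subset_Icc_self hx)).mono_of_mem_nhdsWithin
        (Icc_mem_nhdsGE_of_mem hx))
      (by simp [hS_zero]) bound ht

end WaveformRelaxation

theorem waveform_relaxation_superlinear_bound_general {n : ℕ} (T L : ℝ) (hL : 0 ≤ L)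
    (φ : ℝ → EuclideanSpace ℝ (Fin n) → EuclideanSpace ℝ (Fin n) → EuclideanSpace ℝ (Fin n))
    (hφlip : ∀ t ∈ Icc (0 : ℝ) T, ∀ y y' z z' : EuclideanSpace ℝ (Fin n),
      ‖φ t y z - φ t y' z'‖ ≤ L * (‖y - y'‖ + ‖z - z'‖))
    (s₀ : EuclideanSpace ℝ (Fin n))
    (s : ℝ → EuclideanSpace ℝ (Fin n))
    (hs : ∀ t ∈ Icc (0 : ℝ) T, HasDerivWithinAt s (φ t (s t) (s t)) (Icc 0 T) t)
    (hs0 : s 0 = s₀)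
    (S : ℕ → ℝ → EuclideanSpace ℝ (Fin n))
    (hS0 : ContinuousOn (S 0) (Icc 0 T))
    (hSderiv : ∀ k, ∀ t ∈ Icc (0 : ℝ) T,
      HasDerivWithinAt (S (k + 1)) (φ t (S (k + 1) t) (S k t)) (Icc 0 T) t)
    (hSinit : ∀ k, S (k + 1) 0 = s₀) :
    (∀ k : ℕ, 1 ≤ k → ∀ t ∈ Icc (0 : ℝ) T,
      ‖S k t - s t‖ ≤ (L * Real.exp (L * T)) ^ k * (t ^ k / (Nat.factorial k)) *
        ⨆ τ : Icc (0 : ℝ) T, ‖S 0 ↑τ - s ↑τ‖) ∧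
    TendstoUniformlyOn S s atTop (Icc 0 T) := by
  set M := ⨆ τ : Icc (0 : ℝ) T, ‖S 0 ↑τ - s ↑τ‖
  have hs_cont : ContinuousOn s (Icc 0 T) := fun t ht => (hs t ht).continuousWithinAt
  have hbdd : BddAbove (range fun τ : Icc (0 : ℝ) T => ‖S 0 τ - s τ‖) := by
    have hcont : ContinuousOn (fun t => ‖S 0 t - s t‖) (Icc 0 T) := (hS0.sub hs_cont).norm
    simpa only [image_eq_range] using isCompact_Icc.bddAbove_image hcont
  have hM : ∀ t ∈ Icc (0 : ℝ) T, ‖S 0 t - s t‖ ≤ M := fun t ht => le_ciSup hbdd ⟨t, ht⟩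
  have herr := norm_waveform_iterate_sub_le hL hφlip hs hSderiv
    (fun k => (hSinit k).trans hs0.symm) hM
  refine ⟨fun k hk t ht => ?_, ?_⟩
  · obtain ⟨ht0, htT⟩ := ht
    have hM_nonneg : 0 ≤ M := (norm_nonneg _).trans (hM t ⟨ht0, htT⟩)
    calc ‖S k t - s t‖ ≤ M * (t ^ k / k.factorial) * (L ^ k * Real.exp (L * t)) :=
          (herr k t ⟨ht0, htT⟩).trans_eq (by ring)
      _ ≤ M * (t ^ k / k.factorial) * (L * Real.exp (L * T)) ^ k := by
          gcongr
          exact pow_mul_exp_mul_le_mul_exp_mul_pow hL htT (ht0.trans htT) (by omega)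
      _ = _ := by ring
  · have hlim := (FloorSemiring.tendsto_pow_div_factorial_atTop (L * T)).const_mul
      (M * Real.exp (L * T))
    rw [mul_zero] at hlim
    refine tendstoUniformlyOn_of_norm_sub_le hlim (Eventually.of_forall fun k t ht => ?_)
    obtain ⟨ht0, htT⟩ := ht
    have hM_nonneg : 0 ≤ M := (norm_nonneg _).trans (hM t ⟨ht0, htT⟩)
    calc ‖S k t - s t‖ ≤ M * L ^ k * (Real.exp (L * t) * t ^ k / k.factorial) :=
          herr k t ⟨ht0, htT⟩
      _ ≤ M * L ^ k * (Real.exp (L * T) * T ^ k / k.factorial) := by gcongr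
      _ = _ := by ring

/-- Quantitative (superlinear) error bound for Gauß–Seidel waveform relaxation of ODE
systems with a globally Lipschitz right-hand side on a bounded interval: under the same
hypotheses as the classical convergence theorem, for every `k ≥ 1` and `t ∈ [0, T]`,
`‖S k t − s t‖ ≤ (L e^{LT})^k (t^k / k!) · sup_{τ ∈ [0,T]} ‖S 0 τ − s τ‖`; in
particular the iterates converge to `s` uniformly on `[0, T]`. -/
theorem waveform_relaxation_superlinear_bound {n : ℕ} (T L : ℝ) (hT : 0 < T) (hL : 0 ≤ L)
    (φ : ℝ → EuclideanSpace ℝ (Fin n) → EuclideanSpace ℝ (Fin n) → EuclideanSpace ℝ (Fin n))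
    (hφcont : Continuous fun p : ℝ × EuclideanSpace ℝ (Fin n) × EuclideanSpace ℝ (Fin n) =>
      φ p.1 p.2.1 p.2.2)
    (hφlip : ∀ t ∈ Icc (0 : ℝ) T, ∀ y y' z z' : EuclideanSpace ℝ (Fin n),
      ‖φ t y z - φ t y' z'‖ ≤ L * (‖y - y'‖ + ‖z - z'‖))
    (s₀ : EuclideanSpace ℝ (Fin n))
    (s : ℝ → EuclideanSpace ℝ (Fin n))
    (hs : ∀ t ∈ Icc (0 : ℝ) T, HasDerivWithinAt s (φ t (s t) (s t)) (Icc 0 T) t)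
    (hs0 : s 0 = s₀)
    (S : ℕ → ℝ → EuclideanSpace ℝ (Fin n))
    (hS0 : ContinuousOn (S 0) (Icc 0 T))
    (hSderiv : ∀ k, ∀ t ∈ Icc (0 : ℝ) T,
      HasDerivWithinAt (S (k + 1)) (φ t (S (k + 1) t) (S k t)) (Icc 0 T) t)
    (hSinit : ∀ k, S (k + 1) 0 = s₀) :
    (∀ k : ℕ, 1 ≤ k → ∀ t ∈ Icc (0 : ℝ) T,
      ‖S k t - s t‖ ≤ (L * Real.exp (L * T)) ^ k * (t ^ k / (Nat.factorial k)) *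
        ⨆ τ : Icc (0 : ℝ) T, ‖S 0 ↑τ - s ↑τ‖) ∧
    TendstoUniformlyOn S s atTop (Icc 0 T) :=
  waveform_relaxation_superlinear_bound_general T L hL φ hφlip s₀ s hs hs0 S hS0 hSderiv hSinit
end

section
/- Let T > 0, L ≥ 0, and let (u_k)_{k ≥ 0} be a sequence of continuous nonnegative real-valued functions on [0, T] such that for every k ≥ 1 and every t ∈ [0, T], u_k(t) ≤ L ∫₀ᵗ u_k(τ) dτ + L ∫₀ᵗ u_{k−1}(τ) dτ. Then for every k ≥ 1 and every t ∈ [0, T], u_k(t) ≤ (L e^{LT})^k · (t^k / k!) · sup_{τ ∈ [0, T]} u₀(τ). -/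
/-!
Integrating the bound `u k ≤ D τ ^ k` gives, on `[0, t]`,
`u (k + 1) s ≤ L D t ^ (k + 1) / (k + 1) + L ∫₀ˢ u (k + 1)`, with a constant that does not depend
on `s`. The integral form of Grönwall's inequality, obtained from Mathlib's differential form
applied to the primitive `∫₀ˢ u (k + 1)`, turns this into a bound with the factor
`e ^ (L t) ≤ e ^ (L T)`, and iterating produces `t ^ k / k !`.
-/

open Set MeasureTheory Topology Real
open scoped Nat

theorem hasDerivWithinAt_integral_Ici_of_continuousOn {v : ℝ → ℝ} {a b s : ℝ}
    (hv : ContinuousOn v (Icc a b)) (hs : s ∈ Ico a b) :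
    HasDerivWithinAt (fun x => ∫ τ in a..x, v τ) (v s) (Ici s) s := by
  have hmem : Icc a b ∈ 𝓝[>] s := Icc_mem_nhdsGT_of_mem hs
  exact intervalIntegral.integral_hasDerivWithinAt_right
    ((hv.mono (Icc_subset_Icc_right hs.2.le)).intervalIntegrable_of_Icc hs.1)
    ⟨Icc a b, hmem, hv.aestronglyMeasurable measurableSet_Icc⟩
    ((hv s (Ico_subset_Icc_self hs)).mono_of_mem_nhdsWithin hmem)

theorem add_mul_gronwallBound_zero (K ε x : ℝ) :
    ε + K * gronwallBound 0 K ε x = ε * exp (K * x) := by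
  rcases eq_or_ne K 0 with rfl | hK
  · simp [gronwallBound_K0]
  · rw [gronwallBound_of_K_ne_0 hK]
    field_simp
    ring

theorem le_mul_exp_of_le_add_mul_integral {v : ℝ → ℝ} {a b c L : ℝ} (hL : 0 ≤ L) (hab : a ≤ b)
    (hv : ContinuousOn v (Icc a b))
    (h : ∀ s ∈ Icc a b, v s ≤ c + L * ∫ τ in a..s, v τ) :
    v b ≤ c * exp (L * (b - a)) := by
  set V : ℝ → ℝ := fun s => ∫ τ in a..s, v τ
  have hV : ContinuousOn V (Icc a b) := by
    have := intervalIntegral.continuousOn_primitive_interval (μ := volume)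
      (hv.integrableOn_Icc.mono_set (uIcc_of_le hab).subset)
    rwa [uIcc_of_le hab] at this
  have hVb : V b ≤ gronwallBound 0 L c (b - a) :=
    le_gronwallBound_of_liminf_deriv_right_le hV
      (fun s hs _ hr =>
        (hasDerivWithinAt_integral_Ici_of_continuousOn hv hs).liminf_right_slope_le hr)
      (by simp [V]) (fun s hs => by linarith [h s (Ico_subset_Icc_self hs)]) b (right_mem_Icc.2 hab)
  calc v b ≤ c + L * V b := h b (right_mem_Icc.2 hab)
    _ ≤ c + L * gronwallBound 0 L c (b - a) := by gcongr
    _ = c * exp (L * (b - a)) := add_mul_gronwallBound_zero L c (b - a)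

theorem integral_le_mul_pow_succ_div {w : ℝ → ℝ} {s D : ℝ} {k : ℕ} (hs : 0 ≤ s)
    (hw : ContinuousOn w (Icc 0 s)) (hwD : ∀ τ ∈ Icc 0 s, w τ ≤ D * τ ^ k) :
    ∫ τ in 0..s, w τ ≤ D * s ^ (k + 1) / (k + 1) := by
  calc ∫ τ in 0..s, w τ ≤ ∫ τ in 0..s, D * τ ^ k :=
        intervalIntegral.integral_mono_on hs (hw.intervalIntegrable_of_Icc hs)
          ((continuous_const.mul (continuous_pow k)).intervalIntegrable 0 s) hwD
    _ = D * s ^ (k + 1) / (k + 1) := by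
        rw [intervalIntegral.integral_const_mul, integral_pow]
        ring

theorem le_mul_pow_succ_of_le_mul_integral_add {v w : ℝ → ℝ} {T L D : ℝ} {k : ℕ}
    (hL : 0 ≤ L) (hD : 0 ≤ D) (hv : ContinuousOn v (Icc 0 T)) (hw : ContinuousOn w (Icc 0 T))
    (hwD : ∀ s ∈ Icc 0 T, w s ≤ D * s ^ k)
    (hrec : ∀ s ∈ Icc 0 T, v s ≤ (L * ∫ τ in 0..s, v τ) + L * ∫ τ in 0..s, w τ) :
    ∀ t ∈ Icc 0 T, v t ≤ L * exp (L * T) * D / (k + 1) * t ^ (k + 1) := by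
  intro t ht
  have hsub : Icc 0 t ⊆ Icc 0 T := Icc_subset_Icc_right ht.2
  have hwt : ∀ s ∈ Icc 0 t, ∫ τ in 0..s, w τ ≤ D * t ^ (k + 1) / (k + 1) := fun s hs =>
    calc ∫ τ in 0..s, w τ ≤ D * s ^ (k + 1) / (k + 1) :=
          integral_le_mul_pow_succ_div hs.1 (hw.mono (Icc_subset_Icc_right (hs.2.trans ht.2)))
            fun τ hτ => hwD τ ⟨hτ.1, hτ.2.trans (hs.2.trans ht.2)⟩
      _ ≤ D * t ^ (k + 1) / (k + 1) := by gcongr; exacts [hs.1, hs.2]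
  have hgronwall := le_mul_exp_of_le_add_mul_integral (c := L * (D * t ^ (k + 1) / (k + 1)))
    hL ht.1 (hv.mono hsub) fun s hs => by
      linarith [hrec s (hsub hs), mul_le_mul_of_nonneg_left (hwt s hs) hL]
  calc v t ≤ L * (D * t ^ (k + 1) / (k + 1)) * exp (L * (t - 0)) := hgronwall
    _ ≤ L * (D * t ^ (k + 1) / (k + 1)) * exp (L * T) := by
        have := ht.1
        gcongr
        linarith [ht.2]
    _ = L * exp (L * T) * D / (k + 1) * t ^ (k + 1) := by ring

theorem le_pow_mul_pow_div_factorial_mul_of_le_mul_integral_add {u : ℕ → ℝ → ℝ} {T L M : ℝ}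
    (hL : 0 ≤ L) (hM : 0 ≤ M) (hcont : ∀ k, ContinuousOn (u k) (Icc 0 T))
    (h0 : ∀ t ∈ Icc 0 T, u 0 t ≤ M)
    (hrec : ∀ k : ℕ, ∀ t ∈ Icc 0 T,
      u (k + 1) t ≤ (L * ∫ τ in 0..t, u (k + 1) τ) + L * ∫ τ in 0..t, u k τ) :
    ∀ k : ℕ, ∀ t ∈ Icc 0 T, u k t ≤ (L * exp (L * T)) ^ k * (t ^ k / k !) * M := by
  intro k
  induction k with
  | zero => simpa using h0
  | succ k ih =>
    intro t ht
    have hstep := le_mul_pow_succ_of_le_mul_integral_add (D := (L * exp (L * T)) ^ k / k ! * M)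
      hL (by positivity) (hcont (k + 1)) (hcont k)
      (fun s hs => (ih s hs).trans_eq (by ring)) (hrec k) t ht
    refine hstep.trans_eq ?_
    rw [Nat.factorial_succ]
    push_cast
    field_simp
    ring

theorem recursive_gronwall_inequality_general (T L : ℝ) (hL : 0 ≤ L)
    (u : ℕ → ℝ → ℝ)
    (hcont : ∀ k, ContinuousOn (u k) (Icc 0 T))
    (hnonneg : ∀ k, ∀ t ∈ Icc (0 : ℝ) T, 0 ≤ u k t)
    (hrec : ∀ k : ℕ, ∀ t ∈ Icc (0 : ℝ) T,
      u (k + 1) t ≤ (L * ∫ τ in (0 : ℝ)..t, u (k + 1) τ) + L * ∫ τ in (0 : ℝ)..t, u k τ) :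
    ∀ k : ℕ, 1 ≤ k → ∀ t ∈ Icc (0 : ℝ) T,
      u k t ≤ (L * Real.exp (L * T)) ^ k * (t ^ k / (Nat.factorial k)) *
        ⨆ τ : Icc (0 : ℝ) T, u 0 ↑τ := by
  intro k _ t ht
  have hbdd : BddAbove (u 0 '' Icc 0 T) := isCompact_Icc.bddAbove_image (hcont 0)
  have hsup : ∀ s ∈ Icc 0 T, u 0 s ≤ ⨆ τ : Icc (0 : ℝ) T, u 0 ↑τ := fun s hs =>
    le_ciSup_set hbdd hs
  have hT : (0 : ℝ) ∈ Icc 0 T := left_mem_Icc.2 (ht.1.trans ht.2)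
  exact le_pow_mul_pow_div_factorial_mul_of_le_mul_integral_add hL
    ((hnonneg 0 0 hT).trans (hsup 0 hT)) hcont hsup hrec k t ht

/-- Gronwall-type recursive integral inequality: if `u k` are continuous nonnegative
functions on `[0, T]` satisfying, for every `k ≥ 1` and `t ∈ [0, T]`,
`u k t ≤ L ∫₀ᵗ u k + L ∫₀ᵗ u (k−1)`, then for every `k ≥ 1` and `t ∈ [0, T]`,
`u k t ≤ (L e^{LT})^k (t^k / k!) · sup_{τ ∈ [0,T]} u 0 τ`. -/
theorem recursive_gronwall_inequality (T L : ℝ) (hT : 0 < T) (hL : 0 ≤ L)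
    (u : ℕ → ℝ → ℝ)
    (hcont : ∀ k, ContinuousOn (u k) (Icc 0 T))
    (hnonneg : ∀ k, ∀ t ∈ Icc (0 : ℝ) T, 0 ≤ u k t)
    (hrec : ∀ k : ℕ, ∀ t ∈ Icc (0 : ℝ) T,
      u (k + 1) t ≤ (L * ∫ τ in (0 : ℝ)..t, u (k + 1) τ) + L * ∫ τ in (0 : ℝ)..t, u k τ) :
    ∀ k : ℕ, 1 ≤ k → ∀ t ∈ Icc (0 : ℝ) T,
      u k t ≤ (L * Real.exp (L * T)) ^ k * (t ^ k / (Nat.factorial k)) *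
        ⨆ τ : Icc (0 : ℝ) T, u 0 ↑τ :=
  recursive_gronwall_inequality_general T L hL u hcont hnonneg hrec
end

section
/- Let T > 0, L ≥ 0, 0 ≤ α < 1, and let φ : ℝ × ℝⁿ × ℝⁿ × ℝⁿ → ℝⁿ be continuous with ‖φ(t, y, z, p) − φ(t, y′, z′, p′)‖ ≤ L(‖y − y′‖ + ‖z − z′‖) + α‖p − p′‖ for all t ∈ [0, T] and all arguments. Let s : [0, T] → ℝⁿ be continuously differentiable with s′(t) = φ(t, s(t), s(t), s′(t)) and s(0) = s₀, let s⁰ : [0, T] → ℝⁿ be continuously differentiable, and for each k ≥ 1 let s^k be continuously differentiable with (s^k)′(t) = φ(t, s^k(t), s^{k−1}(t), (s^{k−1})′(t)) and s^k(0) = s₀. Then s^k → s and (s^k)′ → s′ uniformly on [0, T]. -/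
/-!
The errors `eₖ = Sₖ - s`, `dₖ = Sₖ' - s'` are measured in the weighted sup norm
`‖g‖_λ = sup_{t ∈ [0, T]} ‖g t‖ e^{-λt}`. Since `eₖ(0) = 0` for `k ≥ 1` and `eₖ' = dₖ`,
integration gives `‖eₖ‖_λ ≤ ‖dₖ‖_λ / λ`, so the Lipschitz bound on `φ` yields
`‖dₖ₊₁‖_λ ≤ (L/λ) (‖dₖ₊₁‖_λ + ‖dₖ‖_λ) + α ‖dₖ‖_λ`. Choosing `λ` so large that `2L/λ + α < 1`
makes `‖dₖ‖_λ` decay geometrically, and with it `‖eₖ‖_λ`; on the bounded interval `[0, T]`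
the weighted norms are equivalent to the uniform norm.
-/

open Set Filter Topology Real

section WeightedSup

variable {E : Type*} [NormedAddCommGroup E]

noncomputable def expWeightedSup (lam : ℝ) (K : Set ℝ) (g : ℝ → E) : ℝ :=
  sSup ((fun t => ‖g t‖ / exp (lam * t)) '' K)

theorem expWeightedSup_nonneg (lam : ℝ) (K : Set ℝ) (g : ℝ → E) :
    0 ≤ expWeightedSup lam K g :=
  Real.sSup_nonneg <| by
    rintro _ ⟨t, -, rfl⟩
    positivity

theorem norm_le_expWeightedSup_mul_exp {lam : ℝ} {K : Set ℝ} {g : ℝ → E} (hK : IsCompact K)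
    (hg : ContinuousOn g K) {t : ℝ} (ht : t ∈ K) :
    ‖g t‖ ≤ expWeightedSup lam K g * exp (lam * t) := by
  have hbdd : BddAbove ((fun t => ‖g t‖ / exp (lam * t)) '' K) :=
    (hK.image_of_continuousOn (hg.norm.div (by fun_prop) fun t _ => (exp_pos _).ne')).bddAbove
  rw [← div_le_iff₀ (exp_pos _)]
  exact le_csSup hbdd ⟨t, ht, rfl⟩

theorem expWeightedSup_le {lam M : ℝ} {K : Set ℝ} {g : ℝ → E} (hM : 0 ≤ M)
    (hg : ∀ t ∈ K, ‖g t‖ ≤ M * exp (lam * t)) : expWeightedSup lam K g ≤ M :=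
  Real.sSup_le (by rintro _ ⟨t, ht, rfl⟩; exact (div_le_iff₀ (exp_pos _)).2 (hg t ht)) hM

theorem expWeightedSup_le_of_norm_le_lipschitz {F : Type*} [NormedAddCommGroup F] {K : Set ℝ}
    {lam L α : ℝ} (hK : IsCompact K) (hlam : 0 ≤ lam) (hL : 0 ≤ L) (hα : 0 ≤ α)
    {d₀ d₁ : ℝ → E} {e₀ e₁ : ℝ → F} (hd₀ : ContinuousOn d₀ K)
    (he₀ : ∀ t ∈ K, ‖e₀ t‖ ≤ expWeightedSup lam K d₀ / lam * exp (lam * t))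
    (he₁ : ∀ t ∈ K, ‖e₁ t‖ ≤ expWeightedSup lam K d₁ / lam * exp (lam * t))
    (hd₁ : ∀ t ∈ K, ‖d₁ t‖ ≤ L * (‖e₁ t‖ + ‖e₀ t‖) + α * ‖d₀ t‖) :
    expWeightedSup lam K d₁ ≤
      L / lam * expWeightedSup lam K d₁ + (L / lam + α) * expWeightedSup lam K d₀ := by
  have := expWeightedSup_nonneg lam K d₀
  have := expWeightedSup_nonneg lam K d₁
  refine expWeightedSup_le (by positivity) fun t ht => ?_
  calc ‖d₁ t‖ ≤ L * (‖e₁ t‖ + ‖e₀ t‖) + α * ‖d₀ t‖ := hd₁ t ht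
    _ ≤ L * (expWeightedSup lam K d₁ / lam * exp (lam * t) +
          expWeightedSup lam K d₀ / lam * exp (lam * t)) +
        α * (expWeightedSup lam K d₀ * exp (lam * t)) := by
      gcongr
      exacts [he₁ t ht, he₀ t ht, norm_le_expWeightedSup_mul_exp hK hd₀ ht]
    _ = _ := by ring

end WeightedSup

section Integration

variable {E : Type*} [NormedAddCommGroup E] [NormedSpace ℝ E]

theorem norm_le_of_norm_deriv_le_mul_exp {f f' : ℝ → E} {a b C lam : ℝ} (hlam : lam ≠ 0)
    (hf : ∀ t ∈ Icc a b, HasDerivWithinAt f (f' t) (Icc a b) t) (hfa : f a = 0)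
    (hf' : ∀ t ∈ Ico a b, ‖f' t‖ ≤ C * exp (lam * t)) :
    ∀ t ∈ Icc a b, ‖f t‖ ≤ C / lam * (exp (lam * t) - exp (lam * a)) := by
  have hB (t : ℝ) : HasDerivAt (fun t => C / lam * (exp (lam * t) - exp (lam * a)))
      (C * exp (lam * t)) t :=
    ((((hasDerivAt_id t).const_mul lam).exp.sub_const _).const_mul (C / lam)).congr_deriv
      (by field_simp; simp)
  exact fun t ht => image_norm_le_of_norm_deriv_right_le_deriv_boundary
    (fun t ht => (hf t ht).continuousWithinAt)
    (fun t ht => (hf t (Ico_subset_Icc_self ht)).mono_of_mem_nhdsWithin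
      (Icc_mem_nhdsGE_of_mem ht)) (by simp [hfa]) hB hf' ht

theorem norm_le_expWeightedSup_deriv_div_mul_exp {f f' : ℝ → E} {a b lam : ℝ} (hlam : 0 < lam)
    (hf : ∀ t ∈ Icc a b, HasDerivWithinAt f (f' t) (Icc a b) t)
    (hf'c : ContinuousOn f' (Icc a b)) (hfa : f a = 0) :
    ∀ t ∈ Icc a b, ‖f t‖ ≤ expWeightedSup lam (Icc a b) f' / lam * exp (lam * t) := by
  intro t ht
  have hW := expWeightedSup_nonneg lam (Icc a b) f'
  calc ‖f t‖ ≤ expWeightedSup lam (Icc a b) f' / lam * (exp (lam * t) - exp (lam * a)) :=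
        norm_le_of_norm_deriv_le_mul_exp hlam.ne' hf hfa
          (fun t ht => norm_le_expWeightedSup_mul_exp isCompact_Icc hf'c (Ico_subset_Icc_self ht))
          t ht
    _ ≤ expWeightedSup lam (Icc a b) f' / lam * exp (lam * t) := by
        gcongr
        linarith [exp_pos (lam * a)]

end Integration

theorem tendsto_atTop_zero_of_le_mul_succ_add_mul {u : ℕ → ℝ} {a b : ℝ} (hb : 0 ≤ b)
    (hab : a + b < 1) (hu : ∀ k, 0 ≤ u k) (h : ∀ k, u (k + 1) ≤ a * u (k + 1) + b * u k) :
    Tendsto u atTop (𝓝 0) := by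
  have ha : 0 < 1 - a := by linarith
  have hstep (k : ℕ) : u (k + 1) ≤ b / (1 - a) * u k := by
    rw [div_mul_eq_mul_div, le_div_iff₀ ha]
    linarith [h k]
  have hρ : b / (1 - a) < 1 := (div_lt_one ha).2 (by linarith)
  refine squeeze_zero hu (fun k => le_geom (by positivity) k fun j _ => hstep j) ?_
  simpa using (tendsto_pow_atTop_nhds_zero_of_lt_one (by positivity) hρ).mul_const (u 0)

theorem tendstoUniformlyOn_of_norm_sub_succ_le {α E : Type*} [SeminormedAddCommGroup E]
    {K : Set α} {F : ℕ → α → E} {f : α → E} {b : ℕ → ℝ}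
    (hb : Tendsto b atTop (𝓝 0)) (h : ∀ k, ∀ x ∈ K, ‖F (k + 1) x - f x‖ ≤ b k) :
    TendstoUniformlyOn F f atTop K := by
  rw [Metric.tendstoUniformlyOn_iff, ← map_add_atTop_eq_nat 1]
  intro δ hδ
  rw [eventually_map]
  filter_upwards [hb.eventually (gt_mem_nhds hδ)] with k hk x hx
  rw [dist_eq_norm']
  exact (h k x hx).trans_lt hk

theorem exists_pos_div_add_div_add_lt_one {L α : ℝ} (hα : α < 1) :
    ∃ lam : ℝ, 0 < lam ∧ L / lam + (L / lam + α) < 1 := by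
  have hlim : Tendsto (fun lam : ℝ => L / lam + (L / lam + α)) atTop (𝓝 (0 + (0 + α))) :=
    (tendsto_const_nhds.div_atTop tendsto_id).add
      ((tendsto_const_nhds.div_atTop tendsto_id).add_const α)
  exact ((eventually_gt_atTop 0).and (hlim.eventually (gt_mem_nhds (by simpa using hα)))).exists

theorem waveform_relaxation_derivative_contraction_general {n : ℕ}
    (T L α : ℝ) (hL : 0 ≤ L) (hα0 : 0 ≤ α) (hα1 : α < 1)
    (φ : ℝ → EuclideanSpace ℝ (Fin n) → EuclideanSpace ℝ (Fin n) →
      EuclideanSpace ℝ (Fin n) → EuclideanSpace ℝ (Fin n))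
    (hφlip : ∀ t ∈ Icc (0 : ℝ) T, ∀ y y' z z' q q' : EuclideanSpace ℝ (Fin n),
      ‖φ t y z q - φ t y' z' q'‖ ≤ L * (‖y - y'‖ + ‖z - z'‖) + α * ‖q - q'‖)
    (s₀ : EuclideanSpace ℝ (Fin n))
    (s s' : ℝ → EuclideanSpace ℝ (Fin n))
    (hs : ∀ t ∈ Icc (0 : ℝ) T, HasDerivWithinAt s (s' t) (Icc 0 T) t)
    (hs'cont : ContinuousOn s' (Icc 0 T))
    (hseq : ∀ t ∈ Icc (0 : ℝ) T, s' t = φ t (s t) (s t) (s' t))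
    (hs0 : s 0 = s₀)
    (S S' : ℕ → ℝ → EuclideanSpace ℝ (Fin n))
    (hSderiv : ∀ k, ∀ t ∈ Icc (0 : ℝ) T, HasDerivWithinAt (S k) (S' k t) (Icc 0 T) t)
    (hS'cont : ∀ k, ContinuousOn (S' k) (Icc 0 T))
    (hrec : ∀ k, ∀ t ∈ Icc (0 : ℝ) T,
      S' (k + 1) t = φ t (S (k + 1) t) (S k t) (S' k t))
    (hSinit : ∀ k, S (k + 1) 0 = s₀) :
    TendstoUniformlyOn S s atTop (Icc 0 T) ∧
      TendstoUniformlyOn S' s' atTop (Icc 0 T) := by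
  obtain ⟨lam, hlam, hsmall⟩ := exists_pos_div_add_div_add_lt_one (L := L) hα1
  set W : ℕ → ℝ := fun k => expWeightedSup lam (Icc 0 T) (S' (k + 1) - s')
  have hW0 (k : ℕ) : 0 ≤ W k := expWeightedSup_nonneg _ _ _
  have hcont (k : ℕ) : ContinuousOn (S' (k + 1) - s') (Icc 0 T) := (hS'cont _).sub hs'cont
  have hstate (k : ℕ) :
      ∀ t ∈ Icc 0 T, ‖(S (k + 1) - s) t‖ ≤ W k / lam * exp (lam * t) :=
    norm_le_expWeightedSup_deriv_div_mul_exp hlam (fun t ht => (hSderiv _ t ht).sub (hs t ht))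
      (hcont k) (by simp [hSinit, hs0])
  have hderiv (k : ℕ) : ∀ t ∈ Icc 0 T, ‖(S' (k + 2) - s') t‖ ≤
      L * (‖(S (k + 2) - s) t‖ + ‖(S (k + 1) - s) t‖) + α * ‖(S' (k + 1) - s') t‖ := by
    intro t ht
    have h := hφlip t ht (S (k + 2) t) (s t) (S (k + 1) t) (s t) (S' (k + 1) t) (s' t)
    rwa [← hrec (k + 1) t ht, ← hseq t ht] at h
  have hW : Tendsto W atTop (𝓝 0) :=
    tendsto_atTop_zero_of_le_mul_succ_add_mul (by positivity) hsmall hW0 fun k =>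
      expWeightedSup_le_of_norm_le_lipschitz isCompact_Icc hlam.le hL hα0 (hcont k) (hstate k)
        (hstate (k + 1)) (hderiv k)
  constructor
  · refine tendstoUniformlyOn_of_norm_sub_succ_le
      (by simpa using (hW.div_const lam).mul_const (exp (lam * T))) fun k t ht => ?_
    refine (hstate k t ht).trans ?_
    gcongr
    exacts [div_nonneg (hW0 k) hlam.le, ht.2]
  · refine tendstoUniformlyOn_of_norm_sub_succ_le
      (by simpa using hW.mul_const (exp (lam * T))) fun k t ht => ?_
    refine (norm_le_expWeightedSup_mul_exp (lam := lam) isCompact_Icc (hcont k) ht).trans ?_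
    gcongr
    exacts [hW0 k, ht.2]

/-- Convergence criterion for waveform relaxation schemes whose decoupled recursion
`ṡ^k = φ(t, s^k, s^{k−1}, ṡ^{k−1})` involves the derivative of the previous iterate:
if `φ` is continuous, Lipschitz in the solution arguments, and contractive with
constant `α < 1` in the derivative argument, then the iterates and their derivatives
converge uniformly on `[0, T]` to the exact solution and its derivative. -/
theorem waveform_relaxation_derivative_contraction {n : ℕ}
    (T L α : ℝ) (hT : 0 < T) (hL : 0 ≤ L) (hα0 : 0 ≤ α) (hα1 : α < 1)
    (φ : ℝ → EuclideanSpace ℝ (Fin n) → EuclideanSpace ℝ (Fin n) →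
      EuclideanSpace ℝ (Fin n) → EuclideanSpace ℝ (Fin n))
    (hφcont : Continuous fun p : ℝ × EuclideanSpace ℝ (Fin n) × EuclideanSpace ℝ (Fin n) ×
        EuclideanSpace ℝ (Fin n) => φ p.1 p.2.1 p.2.2.1 p.2.2.2)
    (hφlip : ∀ t ∈ Icc (0 : ℝ) T, ∀ y y' z z' q q' : EuclideanSpace ℝ (Fin n),
      ‖φ t y z q - φ t y' z' q'‖ ≤ L * (‖y - y'‖ + ‖z - z'‖) + α * ‖q - q'‖)
    (s₀ : EuclideanSpace ℝ (Fin n))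
    (s s' : ℝ → EuclideanSpace ℝ (Fin n))
    (hs : ∀ t ∈ Icc (0 : ℝ) T, HasDerivWithinAt s (s' t) (Icc 0 T) t)
    (hs'cont : ContinuousOn s' (Icc 0 T))
    (hseq : ∀ t ∈ Icc (0 : ℝ) T, s' t = φ t (s t) (s t) (s' t))
    (hs0 : s 0 = s₀)
    (S S' : ℕ → ℝ → EuclideanSpace ℝ (Fin n))
    (hSderiv : ∀ k, ∀ t ∈ Icc (0 : ℝ) T, HasDerivWithinAt (S k) (S' k t) (Icc 0 T) t)
    (hS'cont : ∀ k, ContinuousOn (S' k) (Icc 0 T))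
    (hrec : ∀ k, ∀ t ∈ Icc (0 : ℝ) T,
      S' (k + 1) t = φ t (S (k + 1) t) (S k t) (S' k t))
    (hSinit : ∀ k, S (k + 1) 0 = s₀) :
    TendstoUniformlyOn S s atTop (Icc 0 T) ∧
      TendstoUniformlyOn S' s' atTop (Icc 0 T) :=
  waveform_relaxation_derivative_contraction_general T L α hL hα0 hα1 φ hφlip s₀ s s' hs hs'cont
    hseq hs0 S S' hSderiv hS'cont hrec hSinit
end
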